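/- arXiv:2001.03959 — 3 statements merged into one kernel-verified Lean document; each statement's English description precedes it below -/
import Mathlib

section
/- Let λ₁ > 0, λ₂ > 0, μ > 0, and set λ = λ₁ + λ₂, ρ₁ = λ₁/μ, ρ₂ = λ₂/μ, ρ = ρ₁ + ρ₂. Define the row vector π ∈ ℝ^5 by π = (1/(2ρ₁ρ₂ + ρ + 1)) · [1, ρ₁, ρ₂, ρ₁ρ₂, ρ₁ρ₂]. Let D be the 5×5 diagonal matrix diag(λ, λ+μ, λ₁+μ, λ₁+μ, λ₁+μ), and let Q be the 5×5 matrix whose rows (indexed 0 to 4) are: row 0 = [0, λ₁, λ₂, 0, 0]; row 1 = [μ, λ₁, 0, λ₂, 0]; row 2 = [μ, 0, 0, 0, λ₁]; row 3 = [0, 0, μ, λ₁, 0]; row 4 = [0, μ, 0, 0, λ₁]. Then the entries of π are all positive, they sum to 1, and π·D = π·Q. -/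
/-!
Both the balance equations and the normalization are homogeneous in `π`, so it suffices to
check that the unnormalized weights `(1, ρ₁, ρ₂, ρ₁ρ₂, ρ₁ρ₂)` satisfy `w D = w Q`. Writing
`λᵢ = ρᵢ μ`, each of the five coordinates of that equation is a polynomial identity in
`ρ₁, ρ₂, μ`; dividing the positive weights by their sum `2ρ₁ρ₂ + ρ + 1` gives `π`.
-/

open Matrix

lemma inv_sum_smul_pos_and_sum_eq_one {ι : Type*} [Fintype ι] [Nonempty ι] {w : ι → ℝ}
    (hw : ∀ i, 0 < w i) :
    (∀ i, 0 < ((∑ j, w j)⁻¹ • w) i) ∧ ∑ i, ((∑ j, w j)⁻¹ • w) i = 1 := by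
  have hsum : 0 < ∑ j, w j := Finset.sum_pos (fun i _ => hw i) Finset.univ_nonempty
  refine ⟨fun i => mul_pos (inv_pos.2 hsum) (hw i), ?_⟩
  simp only [Pi.smul_apply, smul_eq_mul, ← Finset.mul_sum, inv_mul_cancel₀ hsum.ne']

def policy23Weights (rho1 rho2 : ℝ) : Fin 5 → ℝ :=
  ![1, rho1, rho2, rho1 * rho2, rho1 * rho2]

def policy23OutflowMatrix (lam1 lam2 mu : ℝ) : Matrix (Fin 5) (Fin 5) ℝ :=
  diagonal ![lam1 + lam2, lam1 + lam2 + mu, lam1 + mu, lam1 + mu, lam1 + mu]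

def policy23RateMatrix (lam1 lam2 mu : ℝ) : Matrix (Fin 5) (Fin 5) ℝ :=
  of ![![0, lam1, lam2, 0, 0],
       ![mu, lam1, 0, lam2, 0],
       ![mu, 0, 0, 0, lam1],
       ![0, 0, mu, lam1, 0],
       ![0, mu, 0, 0, lam1]]

lemma policy23Weights_pos {rho1 rho2 : ℝ} (h1 : 0 < rho1) (h2 : 0 < rho2) (i : Fin 5) :
    0 < policy23Weights rho1 rho2 i := by
  fin_cases i <;> simp [policy23Weights] <;> positivity

lemma sum_policy23Weights (rho1 rho2 : ℝ) :
    ∑ i, policy23Weights rho1 rho2 i = 2 * rho1 * rho2 + (rho1 + rho2) + 1 := by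
  simp only [policy23Weights, Fin.sum_univ_five, cons_val_zero, cons_val_one, cons_val]
  ring

lemma policy23Weights_vecMul_outflow_eq_vecMul_rate (rho1 rho2 mu : ℝ) :
    policy23Weights rho1 rho2 ᵥ* policy23OutflowMatrix (rho1 * mu) (rho2 * mu) mu =
      policy23Weights rho1 rho2 ᵥ* policy23RateMatrix (rho1 * mu) (rho2 * mu) mu := by
  ext j
  fin_cases j <;>
    simp [policy23Weights, policy23OutflowMatrix, policy23RateMatrix, vecMul, dotProduct,
      Fin.sum_univ_five] <;>
    ring

theorem policy23_stationary_distribution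
    (lam1 lam2 mu : ℝ) (hlam1 : 0 < lam1) (hlam2 : 0 < lam2) (hmu : 0 < mu)
    (lam : ℝ) (hlam : lam = lam1 + lam2)
    (rho1 rho2 rho : ℝ) (hrho1 : rho1 = lam1 / mu) (hrho2 : rho2 = lam2 / mu)
    (hrho : rho = rho1 + rho2)
    (pi : Fin 5 → ℝ)
    (hpi : pi = fun i => (1 / (2 * rho1 * rho2 + rho + 1)) *
      ![1, rho1, rho2, rho1 * rho2, rho1 * rho2] i)
    (D Q : Matrix (Fin 5) (Fin 5) ℝ)
    (hD : D = Matrix.diagonal ![lam, lam + mu, lam1 + mu, lam1 + mu, lam1 + mu])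
    (hQ : Q = Matrix.of
      ![![0, lam1, lam2, 0, 0],
        ![mu, lam1, 0, lam2, 0],
        ![mu, 0, 0, 0, lam1],
        ![0, 0, mu, lam1, 0],
        ![0, mu, 0, 0, lam1]]) :
    (∀ i, 0 < pi i) ∧ (∑ i, pi i = 1) ∧ pi ᵥ* D = pi ᵥ* Q := by
  set w := policy23Weights rho1 rho2
  have hw : ∀ i, 0 < w i :=
    policy23Weights_pos (hrho1 ▸ div_pos hlam1 hmu) (hrho2 ▸ div_pos hlam2 hmu)
  have hpi_eq : pi = (∑ i, w i)⁻¹ • w := by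
    rw [hpi, sum_policy23Weights, ← hrho]
    ext i
    simp [w, policy23Weights, one_div]
  have hlam1_eq : lam1 = rho1 * mu := by rw [hrho1, div_mul_cancel₀ _ hmu.ne']
  have hlam2_eq : lam2 = rho2 * mu := by rw [hrho2, div_mul_cancel₀ _ hmu.ne']
  obtain ⟨hpos, hsum⟩ := inv_sum_smul_pos_and_sum_eq_one hw
  subst hpi_eq hD hQ hlam hlam1_eq hlam2_eq
  refine ⟨hpos, hsum, ?_⟩
  rw [smul_vecMul, smul_vecMul]
  exact congrArg _ (policy23Weights_vecMul_outflow_eq_vecMul_rate rho1 rho2 mu)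
end

section
/- Let ρ₁ > 0, ρ₂ > 0, μ > 0 and ρ = ρ₁ + ρ₂. Define v00 = (ρ₁²(2ρ+5) + (4ρ₁+1)(ρ₂+1)) / (μρ₁(1+ρ₁)²(1+ρ)(1+ρ+2ρ₁ρ₂)), v10 = ((1+ρ₂)(ρ₁³+4ρ₁²+1) + ρ₁(5ρ₂+4)) / (μ(1+ρ₂)(1+ρ₁)²(1+ρ+2ρ₁ρ₂)), v20 = ρ₂(ρ₁²(2ρ+6) + (4ρ₁+1)(ρ₂+1)) / (μρ₁(1+ρ₁)²(1+ρ)(1+ρ+2ρ₁ρ₂)), v30 = ρ₂((1+ρ₂)(2ρ₁³+6ρ₁²+1) + ρ₁(6ρ₂+5)) / (μ(1+ρ₂)(1+ρ₁)²(1+ρ+2ρ₁ρ₂)), and v40 = ρ₂(ρ₁²(ρ₁²+5ρ₁+ρ₁ρ₂+4ρ₂+9) + (5ρ₁+1)(1+ρ₂)) / (μ(1+ρ₁)²(1+ρ)(1+ρ+2ρ₁ρ₂)). Then v00 + v10 + v20 + v30 + v40 = ((ρ₂+1)² + ρ₁(6ρ₂²+11ρ₂+5) + ρ₁²(13ρ₂²+24ρ₂+10)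 + ρ₁³(10ρ₂²+27ρ₂+10) + ρ₁⁴(3ρ₂²+14ρ₂+5) + ρ₁⁵(3ρ₂+1)) / (μρ₁(1+ρ₁)²(ρ₁²(2ρ₂+1) + (ρ₂+1)²(2ρ₁+1))). -/
/-! The denominator of the closed form factors as `(1 + ρ) (1 + ρ + 2 ρ₁ ρ₂)`, so all five
terms live over `μ ρ₁ (1 + ρ₁)² (1 + ρ) (1 + ρ + 2 ρ₁ ρ₂)` except for the factor `1 + ρ₂` in
`v10` and `v30`, which cancels in their sum: the parts of their numerators not visibly divisible
by `1 + ρ₂` add up to `2 ρ₁ (3 ρ₂ + 2) (1 + ρ₂)`. What remains is a polynomial identity. -/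

theorem one_add_add_mul_one_add_add_add_two_mul {R : Type*} [CommRing R] (a b : R) :
    (1 + (a + b)) * (1 + (a + b) + 2 * a * b) = a ^ 2 * (2 * b + 1) + (b + 1) ^ 2 * (2 * a + 1) := by
  ring

theorem policy2_aoi_sum_general
    (rho1 rho2 mu : ℝ) (hrho1 : 0 < rho1) (hrho2 : 0 < rho2)
    (rho : ℝ) (hrho : rho = rho1 + rho2)
    (v00 v10 v20 v30 v40 : ℝ)
    (hv00 : v00 = (rho1 ^ 2 * (2 * rho + 5) + (4 * rho1 + 1) * (rho2 + 1)) /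
      (mu * rho1 * (1 + rho1) ^ 2 * (1 + rho) * (1 + rho + 2 * rho1 * rho2)))
    (hv10 : v10 = ((1 + rho2) * (rho1 ^ 3 + 4 * rho1 ^ 2 + 1) + rho1 * (5 * rho2 + 4)) /
      (mu * (1 + rho2) * (1 + rho1) ^ 2 * (1 + rho + 2 * rho1 * rho2)))
    (hv20 : v20 = rho2 * (rho1 ^ 2 * (2 * rho + 6) + (4 * rho1 + 1) * (rho2 + 1)) /
      (mu * rho1 * (1 + rho1) ^ 2 * (1 + rho) * (1 + rho + 2 * rho1 * rho2)))
    (hv30 : v30 = rho2 * ((1 + rho2) * (2 * rho1 ^ 3 + 6 * rho1 ^ 2 + 1) + rho1 * (6 * rho2 + 5)) /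
      (mu * (1 + rho2) * (1 + rho1) ^ 2 * (1 + rho + 2 * rho1 * rho2)))
    (hv40 : v40 = rho2 * (rho1 ^ 2 * (rho1 ^ 2 + 5 * rho1 + rho1 * rho2 + 4 * rho2 + 9) +
        (5 * rho1 + 1) * (1 + rho2)) /
      (mu * (1 + rho1) ^ 2 * (1 + rho) * (1 + rho + 2 * rho1 * rho2))) :
    v00 + v10 + v20 + v30 + v40 =
      ((rho2 + 1) ^ 2 + rho1 * (6 * rho2 ^ 2 + 11 * rho2 + 5) +
        rho1 ^ 2 * (13 * rho2 ^ 2 + 24 * rho2 + 10) +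
        rho1 ^ 3 * (10 * rho2 ^ 2 + 27 * rho2 + 10) +
        rho1 ^ 4 * (3 * rho2 ^ 2 + 14 * rho2 + 5) +
        rho1 ^ 5 * (3 * rho2 + 1)) /
      (mu * rho1 * (1 + rho1) ^ 2 *
        (rho1 ^ 2 * (2 * rho2 + 1) + (rho2 + 1) ^ 2 * (2 * rho1 + 1))) := by
  subst hrho hv00 hv10 hv20 hv30 hv40
  rcases eq_or_ne mu 0 with rfl | hmu
  · simp
  rw [← one_add_add_mul_one_add_add_add_two_mul]
  field_simp
  ring

theorem policy2_aoi_sum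
    (rho1 rho2 mu : ℝ) (hrho1 : 0 < rho1) (hrho2 : 0 < rho2) (hmu : 0 < mu)
    (rho : ℝ) (hrho : rho = rho1 + rho2)
    (v00 v10 v20 v30 v40 : ℝ)
    (hv00 : v00 = (rho1 ^ 2 * (2 * rho + 5) + (4 * rho1 + 1) * (rho2 + 1)) /
      (mu * rho1 * (1 + rho1) ^ 2 * (1 + rho) * (1 + rho + 2 * rho1 * rho2)))
    (hv10 : v10 = ((1 + rho2) * (rho1 ^ 3 + 4 * rho1 ^ 2 + 1) + rho1 * (5 * rho2 + 4)) /
      (mu * (1 + rho2) * (1 + rho1) ^ 2 * (1 + rho + 2 * rho1 * rho2)))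
    (hv20 : v20 = rho2 * (rho1 ^ 2 * (2 * rho + 6) + (4 * rho1 + 1) * (rho2 + 1)) /
      (mu * rho1 * (1 + rho1) ^ 2 * (1 + rho) * (1 + rho + 2 * rho1 * rho2)))
    (hv30 : v30 = rho2 * ((1 + rho2) * (2 * rho1 ^ 3 + 6 * rho1 ^ 2 + 1) + rho1 * (6 * rho2 + 5)) /
      (mu * (1 + rho2) * (1 + rho1) ^ 2 * (1 + rho + 2 * rho1 * rho2)))
    (hv40 : v40 = rho2 * (rho1 ^ 2 * (rho1 ^ 2 + 5 * rho1 + rho1 * rho2 + 4 * rho2 + 9) +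
        (5 * rho1 + 1) * (1 + rho2)) /
      (mu * (1 + rho1) ^ 2 * (1 + rho) * (1 + rho + 2 * rho1 * rho2))) :
    v00 + v10 + v20 + v30 + v40 =
      ((rho2 + 1) ^ 2 + rho1 * (6 * rho2 ^ 2 + 11 * rho2 + 5) +
        rho1 ^ 2 * (13 * rho2 ^ 2 + 24 * rho2 + 10) +
        rho1 ^ 3 * (10 * rho2 ^ 2 + 27 * rho2 + 10) +
        rho1 ^ 4 * (3 * rho2 ^ 2 + 14 * rho2 + 5) +
        rho1 ^ 5 * (3 * rho2 + 1)) /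
      (mu * rho1 * (1 + rho1) ^ 2 *
        (rho1 ^ 2 * (2 * rho2 + 1) + (rho2 + 1) ^ 2 * (2 * rho1 + 1))) :=
  policy2_aoi_sum_general rho1 rho2 mu hrho1 hrho2 rho hrho v00 v10 v20 v30 v40 hv00 hv10 hv20 hv30
    hv40
end

section
/- Let ρ₁ > 0, ρ₂ > 0, μ > 0 and ρ = ρ₁ + ρ₂. Define v00 = (ρ₁³ + ρ₁²((ρ₂+2)²−1) + (ρ₂+1)²(3ρ₁+1)) / (μρ₁(1+ρ₁)(1+ρ₂)(1+ρ)(1+ρ+2ρ₁ρ₂)), v10 = ((1+ρ₂)(2ρ₁²+1) + ρ₁(4ρ₂+3)) / (μ(1+ρ₂)(1+ρ₁)(1+ρ+2ρ₁ρ₂)), v20 = ρ₂(ρ₁³(ρ₂+2) + ρ₁²(ρ₂²+5ρ₂+4) + (3ρ₁+1)(ρ₂+1)²) / (μρ₁(1+ρ₁)(1+ρ₂)(1+ρ)(1+ρ+2ρ₁ρ₂)), v30 = ρ₂((ρ₂+1)(3ρ₁²+1) + ρ₁(5ρ₂+4)) / (μ(1+ρ₁)(1+ρ₂)(1+ρ+2ρ₁ρ₂)),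 and v40 = ρ₂(ρ₁³(2ρ₂+3) + 2ρ₁²((ρ₂+2)²−1) + (4ρ₁+1)(ρ₂+1)²) / (μ(1+ρ₁)(1+ρ₂)(1+ρ)(1+ρ+2ρ₁ρ₂)). Then v00 + v10 + v20 + v30 + v40 = ((ρ₂+1)³ + ρ₁(5ρ₂³+14ρ₂²+13ρ₂+4) + ρ₁²(10ρ₂³+28ρ₂²+25ρ₂+7) + ρ₁³(5ρ₂³+22ρ₂²+23ρ₂+6) + ρ₁⁴(5ρ₂²+8ρ₂+2)) / (μρ₁(1+ρ₁)(1+ρ₂)(ρ₁²(2ρ₂+1) + (ρ₂+1)²(2ρ₁+1))). -/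
theorem policy3_normalized_aoi_sum {rho1 rho2 : ℝ} (hrho1 : 0 < rho1) (hrho2 : 0 < rho2) :
    (rho1 ^ 3 + rho1 ^ 2 * ((rho2 + 2) ^ 2 - 1) + (rho2 + 1) ^ 2 * (3 * rho1 + 1)) /
        (rho1 * (1 + rho1) * (1 + rho2) * (1 + (rho1 + rho2)) *
          (1 + (rho1 + rho2) + 2 * rho1 * rho2)) +
      ((1 + rho2) * (2 * rho1 ^ 2 + 1) + rho1 * (4 * rho2 + 3)) /
        ((1 + rho2) * (1 + rho1) * (1 + (rho1 + rho2) + 2 * rho1 * rho2)) +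
      rho2 * (rho1 ^ 3 * (rho2 + 2) + rho1 ^ 2 * (rho2 ^ 2 + 5 * rho2 + 4) +
          (3 * rho1 + 1) * (rho2 + 1) ^ 2) /
        (rho1 * (1 + rho1) * (1 + rho2) * (1 + (rho1 + rho2)) *
          (1 + (rho1 + rho2) + 2 * rho1 * rho2)) +
      rho2 * ((rho2 + 1) * (3 * rho1 ^ 2 + 1) + rho1 * (5 * rho2 + 4)) /
        ((1 + rho1) * (1 + rho2) * (1 + (rho1 + rho2) + 2 * rho1 * rho2)) +
      rho2 * (rho1 ^ 3 * (2 * rho2 + 3) + 2 * rho1 ^ 2 * ((rho2 + 2) ^ 2 - 1) +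
          (4 * rho1 + 1) * (rho2 + 1) ^ 2) /
        ((1 + rho1) * (1 + rho2) * (1 + (rho1 + rho2)) * (1 + (rho1 + rho2) + 2 * rho1 * rho2)) =
    ((rho2 + 1) ^ 3 + rho1 * (5 * rho2 ^ 3 + 14 * rho2 ^ 2 + 13 * rho2 + 4) +
        rho1 ^ 2 * (10 * rho2 ^ 3 + 28 * rho2 ^ 2 + 25 * rho2 + 7) +
        rho1 ^ 3 * (5 * rho2 ^ 3 + 22 * rho2 ^ 2 + 23 * rho2 + 6) +
        rho1 ^ 4 * (5 * rho2 ^ 2 + 8 * rho2 + 2)) /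
      (rho1 * (1 + rho1) * (1 + rho2) *
        (rho1 ^ 2 * (2 * rho2 + 1) + (rho2 + 1) ^ 2 * (2 * rho1 + 1))) := by
  rw [← one_add_add_mul_one_add_add_add_two_mul]
  have : 0 < 1 + (rho1 + rho2) + 2 * rho1 * rho2 := by positivity
  field_simp
  ring

theorem policy3_aoi_sum_general
    (rho1 rho2 mu : ℝ) (hrho1 : 0 < rho1) (hrho2 : 0 < rho2)
    (rho : ℝ) (hrho : rho = rho1 + rho2)
    (v00 v10 v20 v30 v40 : ℝ)
    (hv00 : v00 = (rho1 ^ 3 + rho1 ^ 2 * ((rho2 + 2) ^ 2 - 1) +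
        (rho2 + 1) ^ 2 * (3 * rho1 + 1)) /
      (mu * rho1 * (1 + rho1) * (1 + rho2) * (1 + rho) * (1 + rho + 2 * rho1 * rho2)))
    (hv10 : v10 = ((1 + rho2) * (2 * rho1 ^ 2 + 1) + rho1 * (4 * rho2 + 3)) /
      (mu * (1 + rho2) * (1 + rho1) * (1 + rho + 2 * rho1 * rho2)))
    (hv20 : v20 = rho2 * (rho1 ^ 3 * (rho2 + 2) + rho1 ^ 2 * (rho2 ^ 2 + 5 * rho2 + 4) +
        (3 * rho1 + 1) * (rho2 + 1) ^ 2) /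
      (mu * rho1 * (1 + rho1) * (1 + rho2) * (1 + rho) * (1 + rho + 2 * rho1 * rho2)))
    (hv30 : v30 = rho2 * ((rho2 + 1) * (3 * rho1 ^ 2 + 1) + rho1 * (5 * rho2 + 4)) /
      (mu * (1 + rho1) * (1 + rho2) * (1 + rho + 2 * rho1 * rho2)))
    (hv40 : v40 = rho2 * (rho1 ^ 3 * (2 * rho2 + 3) + 2 * rho1 ^ 2 * ((rho2 + 2) ^ 2 - 1) +
        (4 * rho1 + 1) * (rho2 + 1) ^ 2) /
      (mu * (1 + rho1) * (1 + rho2) * (1 + rho) * (1 + rho + 2 * rho1 * rho2))) :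
    v00 + v10 + v20 + v30 + v40 =
      ((rho2 + 1) ^ 3 + rho1 * (5 * rho2 ^ 3 + 14 * rho2 ^ 2 + 13 * rho2 + 4) +
        rho1 ^ 2 * (10 * rho2 ^ 3 + 28 * rho2 ^ 2 + 25 * rho2 + 7) +
        rho1 ^ 3 * (5 * rho2 ^ 3 + 22 * rho2 ^ 2 + 23 * rho2 + 6) +
        rho1 ^ 4 * (5 * rho2 ^ 2 + 8 * rho2 + 2)) /
      (mu * rho1 * (1 + rho1) * (1 + rho2) *
        (rho1 ^ 2 * (2 * rho2 + 1) + (rho2 + 1) ^ 2 * (2 * rho1 + 1))) := by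
  subst hrho hv00 hv10 hv20 hv30 hv40
  have normalized := congrArg (· / mu) (policy3_normalized_aoi_sum hrho1 hrho2)
  simp only [add_div, div_div] at normalized
  convert normalized using 2 <;> ring

theorem policy3_aoi_sum
    (rho1 rho2 mu : ℝ) (hrho1 : 0 < rho1) (hrho2 : 0 < rho2) (hmu : 0 < mu)
    (rho : ℝ) (hrho : rho = rho1 + rho2)
    (v00 v10 v20 v30 v40 : ℝ)
    (hv00 : v00 = (rho1 ^ 3 + rho1 ^ 2 * ((rho2 + 2) ^ 2 - 1) +
        (rho2 + 1) ^ 2 * (3 * rho1 + 1)) /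
      (mu * rho1 * (1 + rho1) * (1 + rho2) * (1 + rho) * (1 + rho + 2 * rho1 * rho2)))
    (hv10 : v10 = ((1 + rho2) * (2 * rho1 ^ 2 + 1) + rho1 * (4 * rho2 + 3)) /
      (mu * (1 + rho2) * (1 + rho1) * (1 + rho + 2 * rho1 * rho2)))
    (hv20 : v20 = rho2 * (rho1 ^ 3 * (rho2 + 2) + rho1 ^ 2 * (rho2 ^ 2 + 5 * rho2 + 4) +
        (3 * rho1 + 1) * (rho2 + 1) ^ 2) /
      (mu * rho1 * (1 + rho1) * (1 + rho2) * (1 + rho) * (1 + rho + 2 * rho1 * rho2)))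
    (hv30 : v30 = rho2 * ((rho2 + 1) * (3 * rho1 ^ 2 + 1) + rho1 * (5 * rho2 + 4)) /
      (mu * (1 + rho1) * (1 + rho2) * (1 + rho + 2 * rho1 * rho2)))
    (hv40 : v40 = rho2 * (rho1 ^ 3 * (2 * rho2 + 3) + 2 * rho1 ^ 2 * ((rho2 + 2) ^ 2 - 1) +
        (4 * rho1 + 1) * (rho2 + 1) ^ 2) /
      (mu * (1 + rho1) * (1 + rho2) * (1 + rho) * (1 + rho + 2 * rho1 * rho2))) :
    v00 + v10 + v20 + v30 + v40 =
      ((rho2 + 1) ^ 3 + rho1 * (5 * rho2 ^ 3 + 14 * rho2 ^ 2 + 13 * rho2 + 4) +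
        rho1 ^ 2 * (10 * rho2 ^ 3 + 28 * rho2 ^ 2 + 25 * rho2 + 7) +
        rho1 ^ 3 * (5 * rho2 ^ 3 + 22 * rho2 ^ 2 + 23 * rho2 + 6) +
        rho1 ^ 4 * (5 * rho2 ^ 2 + 8 * rho2 + 2)) /
      (mu * rho1 * (1 + rho1) * (1 + rho2) *
        (rho1 ^ 2 * (2 * rho2 + 1) + (rho2 + 1) ^ 2 * (2 * rho1 + 1))) :=
  policy3_aoi_sum_general rho1 rho2 mu hrho1 hrho2 rho hrho v00 v10 v20 v30 v40 hv00 hv10 hv20 hv30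
    hv40
end
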